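/- Let E₁ and E₂ be symmetric positive definite k×k matrices and |r| < 1. Then the inverse of R = [[E₁, r√(E₁E₂)],[r(√(E₁E₂))ᵀ, E₂]] is (1-r²)⁻¹ [[E₁⁻¹, -r√(E₁⁻¹E₂⁻¹)],[-r(√(E₁⁻¹E₂⁻¹))ᵀ, E₂⁻¹]]. -/

import Mathlib

/-!
Write `A = √E₁` and `B = √(A E₂ A)`, so that `S := √(E₁E₂) = A B A⁻¹`. Since the square root
commutes with inversion, `√(E₁⁻¹E₂⁻¹) = A⁻¹ B⁻¹ A = (Sᵀ)⁻¹`, and `Sᵀ E₁⁻¹ S = A⁻¹ B² A⁻¹ = E₂`.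
For any invertible `S` with `Sᵀ E₁⁻¹ S = E₂`, multiplying out the blocks shows that
`(1 - r²)⁻¹ [[E₁⁻¹, -r (Sᵀ)⁻¹], [-r S⁻¹, E₂⁻¹]]` inverts `[[E₁, r S], [r Sᵀ, E₂]]`.
-/

open Matrix

section

open scoped ComplexOrder

/-- The square root of a positive semidefinite matrix, as `Matrix.PosSemidef.sqrt` was defined
in Mathlib (December 2024); it has since been removed from Mathlib. -/
noncomputable def Matrix.PosSemidef.sqrt {n : Type*} {𝕜 : Type*} [Fintype n] [RCLike 𝕜]
    [DecidableEq n] {A : Matrix n n 𝕜} (hA : A.PosSemidef) : Matrix n n 𝕜 :=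
  hA.1.eigenvectorUnitary.1 * diagonal ((↑) ∘ (√·) ∘ hA.1.eigenvalues) *
  (star hA.1.eigenvectorUnitary : Matrix n n 𝕜)

end

/-- The principal square root of `E₁ * E₂` for positive definite `E₁, E₂`:
`E₁^{1/2} · (E₁^{1/2} E₂ E₁^{1/2})^{1/2} · E₁^{-1/2}`. -/
noncomputable def principalSqrtMul {k : ℕ} {E₁ E₂ : Matrix (Fin k) (Fin k) ℝ}
    (h₁ : E₁.PosDef) (h₂ : E₂.PosDef) : Matrix (Fin k) (Fin k) ℝ :=
  h₁.posSemidef.sqrt *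
    (h₂.posSemidef.mul_mul_conjTranspose_same h₁.posSemidef.sqrt).sqrt *
    h₁.posSemidef.sqrt⁻¹

open scoped ComplexOrder MatrixOrder

namespace Matrix

theorem inv_fromBlocks_of_transpose_mul_inv_mul {n K : Type*} [Fintype n] [DecidableEq n]
    [Field K] {E₁ E₂ S : Matrix n n K} (hE₁ : IsUnit E₁.det) (hS : IsUnit S.det)
    (hE₂ : Sᵀ * E₁⁻¹ * S = E₂) {r : K} (hr : 1 - r ^ 2 ≠ 0) :
    (fromBlocks E₁ (r • S) (r • Sᵀ) E₂)⁻¹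
      = (1 - r ^ 2)⁻¹ • fromBlocks E₁⁻¹ ((-r) • Sᵀ⁻¹) ((-r) • Sᵀ⁻¹ᵀ) E₂⁻¹ := by
  have hSt : IsUnit Sᵀ.det := by rwa [det_transpose]
  have hE₂i : E₂⁻¹ = S⁻¹ * E₁ * Sᵀ⁻¹ := by
    rw [← hE₂, Matrix.mul_inv_rev, Matrix.mul_inv_rev, nonsing_inv_nonsing_inv _ hE₁,
      Matrix.mul_assoc]
  have hSE₂ : S * E₂⁻¹ = E₁ * Sᵀ⁻¹ := by
    rw [hE₂i, ← Matrix.mul_assoc, ← Matrix.mul_assoc, mul_nonsing_inv _ hS, Matrix.one_mul]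
  have hE₂S : E₂ * S⁻¹ = Sᵀ * E₁⁻¹ := by
    rw [← hE₂, Matrix.mul_assoc, mul_nonsing_inv _ hS, Matrix.mul_one]
  have hE₂d : IsUnit E₂.det := by
    rw [← hE₂, det_mul, det_mul]
    exact (hSt.mul (isUnit_nonsing_inv_det _ hE₁)).mul hS
  refine inv_eq_right_inv ?_
  rw [Matrix.mul_smul, fromBlocks_multiply, transpose_nonsing_inv, transpose_transpose]
  simp only [Matrix.smul_mul, Matrix.mul_smul, smul_smul, hSE₂, hE₂S, mul_nonsing_inv _ hE₁,
    mul_nonsing_inv _ hS, mul_nonsing_inv _ hSt, mul_nonsing_inv _ hE₂d]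
  calc _ = (1 - r ^ 2)⁻¹ • (1 - r ^ 2) • fromBlocks (1 : Matrix n n K) 0 0 1 := by
        congr 1
        rw [fromBlocks_smul, smul_zero]
        congr 1 <;> module
    _ = 1 := by rw [smul_smul, inv_mul_cancel₀ hr, one_smul, fromBlocks_one]

theorem PosSemidef.sqrt_eq_cfcSqrt {n 𝕜 : Type*} [Fintype n] [DecidableEq n] [RCLike 𝕜]
    {A : Matrix n n 𝕜} (hA : A.PosSemidef) : hA.sqrt = CFC.sqrt A := by
  rw [CFC.sqrt_eq_cfc, cfc_nnreal_eq_real _ A, hA.1.cfc_eq]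
  simp only [IsHermitian.cfc, PosSemidef.sqrt]
  congr 3
  ext i
  simp [max_eq_left (hA.eigenvalues_nonneg i)]

theorem cfcSqrt_inv {n 𝕜 : Type*} [Fintype n] [DecidableEq n] [RCLike 𝕜] (A : Matrix n n 𝕜) :
    CFC.sqrt A⁻¹ = (CFC.sqrt A)⁻¹ := by
  simp only [nonsing_inv_eq_ringInverse, CFC.sqrt_ringInverse]

theorem PosDef.isUnit_cfcSqrt {n 𝕜 : Type*} [Fintype n] [DecidableEq n] [RCLike 𝕜]
    {A : Matrix n n 𝕜} (hA : A.PosDef) : IsUnit (CFC.sqrt A) :=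
  CFC.isUnit_sqrt_iff_isStrictlyPositive.2 (isStrictlyPositive_iff_posDef.2 hA)

theorem transpose_cfcSqrt {n : Type*} [Fintype n] [DecidableEq n] (A : Matrix n n ℝ) :
    (CFC.sqrt A)ᵀ = CFC.sqrt A := by
  rw [← conjTranspose_eq_transpose_of_trivial]
  exact (CFC.sqrt_nonneg A).isSelfAdjoint

end Matrix

section

variable {k : ℕ} {E₁ E₂ : Matrix (Fin k) (Fin k) ℝ} (h₁ : E₁.PosDef) (h₂ : E₂.PosDef)

theorem principalSqrtMul_eq_cfcSqrt : principalSqrtMul h₁ h₂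
    = CFC.sqrt E₁ * CFC.sqrt (CFC.sqrt E₁ * E₂ * CFC.sqrt E₁) * (CFC.sqrt E₁)⁻¹ := by
  simp only [principalSqrtMul, PosSemidef.sqrt_eq_cfcSqrt, conjTranspose_eq_transpose_of_trivial,
    transpose_cfcSqrt]

theorem principalSqrtMul_transpose : (principalSqrtMul h₁ h₂)ᵀ
    = (CFC.sqrt E₁)⁻¹ * CFC.sqrt (CFC.sqrt E₁ * E₂ * CFC.sqrt E₁) * CFC.sqrt E₁ := by
  simp only [principalSqrtMul_eq_cfcSqrt, transpose_mul, transpose_nonsing_inv, transpose_cfcSqrt,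
    Matrix.mul_assoc]

theorem principalSqrtMul_inv_inv :
    principalSqrtMul h₁.inv h₂.inv = (principalSqrtMul h₁ h₂)ᵀ⁻¹ := by
  rw [principalSqrtMul_transpose, principalSqrtMul_eq_cfcSqrt, cfcSqrt_inv E₁, Matrix.mul_inv_rev,
    Matrix.mul_inv_rev, ← cfcSqrt_inv (CFC.sqrt E₁ * E₂ * CFC.sqrt E₁), Matrix.mul_inv_rev,
    Matrix.mul_inv_rev]
  simp only [Matrix.mul_assoc]

theorem isUnit_det_principalSqrtMul : IsUnit (principalSqrtMul h₁ h₂).det := by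
  have hA := h₁.isUnit_cfcSqrt
  have hB : IsUnit (CFC.sqrt (CFC.sqrt E₁ * E₂ * CFC.sqrt E₁)) := by
    refine CFC.isUnit_sqrt_iff_isStrictlyPositive.2 ?_
    have hconj :=
      hA.isStrictlyPositive_star_right_conjugate_iff.2 (isStrictlyPositive_iff_posDef.2 h₂)
    rwa [(CFC.sqrt_nonneg E₁).isSelfAdjoint.star_eq] at hconj
  rw [principalSqrtMul_eq_cfcSqrt, ← isUnit_iff_isUnit_det]
  exact (hA.mul hB).mul (by rwa [isUnit_nonsing_inv_iff])

theorem transpose_principalSqrtMul_mul_inv_mul :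
    (principalSqrtMul h₁ h₂)ᵀ * E₁⁻¹ * principalSqrtMul h₁ h₂ = E₂ := by
  rw [principalSqrtMul_transpose, principalSqrtMul_eq_cfcSqrt]
  set A := CFC.sqrt E₁
  set B := CFC.sqrt (A * E₂ * A)
  have hAA : A * A = E₁ := CFC.sqrt_mul_sqrt_self E₁ h₁.posSemidef.nonneg
  have hBB : B * B = A * E₂ * A :=
    CFC.sqrt_mul_sqrt_self _ (conjugate_nonneg_of_nonneg h₂.posSemidef.nonneg (CFC.sqrt_nonneg E₁))
  have : Invertible A := h₁.isUnit_cfcSqrt.invertible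
  calc A⁻¹ * B * A * E₁⁻¹ * (A * B * A⁻¹) = A⁻¹ * (B * B) * A⁻¹ := by
        simp [← hAA, Matrix.mul_inv_rev, Matrix.mul_assoc]
    _ = E₂ := by simp [hBB, Matrix.mul_assoc]

end

/-- For `|r| < 1`, the inverse of `R = [[E₁, r√(E₁E₂)], [r(√(E₁E₂))ᵀ, E₂]]` is
`(1-r²)⁻¹ [[E₁⁻¹, -r√(E₁⁻¹E₂⁻¹)], [-r(√(E₁⁻¹E₂⁻¹))ᵀ, E₂⁻¹]]`. -/
theorem pairwise_block_inv (k : ℕ) (E₁ E₂ : Matrix (Fin k) (Fin k) ℝ)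
    (h₁ : E₁.PosDef) (h₂ : E₂.PosDef) (r : ℝ) (hr : |r| < 1) :
    (Matrix.fromBlocks E₁ (r • principalSqrtMul h₁ h₂)
        (r • (principalSqrtMul h₁ h₂)ᵀ) E₂)⁻¹
      = (1 - r ^ 2)⁻¹ •
        Matrix.fromBlocks E₁⁻¹ ((-r) • principalSqrtMul h₁.inv h₂.inv)
          ((-r) • (principalSqrtMul h₁.inv h₂.inv)ᵀ) E₂⁻¹ := by
  rw [principalSqrtMul_inv_inv]
  exact inv_fromBlocks_of_transpose_mul_inv_mul h₁.det_pos.ne'.isUnit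
    (isUnit_det_principalSqrtMul h₁ h₂) (transpose_principalSqrtMul_mul_inv_mul h₁ h₂)
    (sub_pos.2 ((sq_lt_one_iff_abs_lt_one r).2 hr)).ne'
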